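/- Let R be the multivariate polynomial ring over ℤ[z] in the variables a_0, a_1, a_2, …, b, c, and let D be the unique ℤ[z]-linear derivation of R satisfying D(a_j) = a_{j+1}·b^j·c for every j ≥ 0, D(b) = 2b, and D(c) = (1+z)·c. Then for every n ≥ 1, D^n(a_0) = Σ_{k=1}^{n} JS_n^k(z) · a_k · b^{C(k,2)} · c^k, where C(k,2) = k(k−1)/2. -/

import Mathlib

open MvPolynomial

/-- The Jacobi-Stirling numbers of the second kind `JS_n^k(z)`, as polynomials in `ℤ[z]`. -/
noncomputable def JS : ℕ → ℕ → Polynomial ℤ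
  | 0, 0 => 1
  | 0, _ + 1 => 0
  | _ + 1, 0 => 0
  | n + 1, k + 1 =>
      JS n k +
        Polynomial.C ((k : ℤ) + 1) * (Polynomial.C ((k : ℤ) + 1) + Polynomial.X) *
          JS n (k + 1)

/-- The variables `a₀, a₁, a₂, …, b, c`. -/
inductive GVar where
  | a : ℕ → GVar
  | b : GVar
  | c : GVar

/-!
Every monomial `a_k b^{C(k,2)} c^k` is mapped by `D` to `a_{k+1} b^{C(k+1,2)} c^{k+1}` plus
`(2 C(k,2) + k(1+z)) = k(k+z)` times itself. Hence `D` acts on the span of these monomials exactly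
as the recurrence of the Jacobi-Stirling numbers, and induction on `n` gives the expansion.
-/

lemma Derivation.leibniz_pow_of_eq_mul {R A : Type*} [CommSemiring R] [CommSemiring A]
    [Algebra R A] (D : Derivation R A A) {x y : A} (hx : D x = y * x) (n : ℕ) :
    D (x ^ n) = n * y * x ^ n := by
  induction n with
  | zero => simp
  | succ n ih =>
    rw [pow_succ, D.leibniz, ih, hx, smul_eq_mul, smul_eq_mul]
    push_cast
    ring

lemma Nat.two_mul_choose_two_add_self (k : ℕ) : 2 * k.choose 2 + k = k * k := by
  induction k with
  | zero => rfl
  | succ k ih =>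
    rw [Nat.choose_succ_succ', Nat.choose_one_right]
    nlinarith

noncomputable def jsCoeff (k : ℕ) : Polynomial ℤ :=
  (k : Polynomial ℤ) * ((k : Polynomial ℤ) + Polynomial.X)

lemma JS_succ_zero (n : ℕ) : JS (n + 1) 0 = 0 := rfl

lemma JS_succ_succ (n k : ℕ) : JS (n + 1) (k + 1) = JS n k + jsCoeff (k + 1) * JS n (k + 1) := by
  rw [JS, jsCoeff]
  simp only [Nat.cast_add, Nat.cast_one, map_add, map_natCast, map_one]

lemma JS_eq_zero_of_lt {n k : ℕ} (h : n < k) : JS n k = 0 := by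
  induction n generalizing k with
  | zero => obtain ⟨k, rfl⟩ := Nat.exists_eq_add_one_of_ne_zero (by omega : k ≠ 0); rfl
  | succ n ih =>
    obtain ⟨k, rfl⟩ := Nat.exists_eq_add_one_of_ne_zero (by omega : k ≠ 0)
    rw [JS_succ_succ, ih (by omega), ih (by omega), mul_zero, add_zero]

noncomputable def jsMonomial (k : ℕ) : MvPolynomial GVar (Polynomial ℤ) :=
  X (GVar.a k) * X GVar.b ^ k.choose 2 * X GVar.c ^ k

section

variable (D : Derivation (Polynomial ℤ) (MvPolynomial GVar (Polynomial ℤ))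
  (MvPolynomial GVar (Polynomial ℤ)))

lemma derivation_jsMonomial
    (ha : ∀ j : ℕ, D (X (GVar.a j)) = X (GVar.a (j + 1)) * X GVar.b ^ j * X GVar.c)
    (hb : D (X GVar.b) = 2 * X GVar.b)
    (hc : D (X GVar.c) = C (1 + Polynomial.X) * X GVar.c) (k : ℕ) :
    D (jsMonomial k) = jsMonomial (k + 1) + C (jsCoeff k) * jsMonomial k := by
  have hchoose : 2 * (k.choose 2 : MvPolynomial GVar (Polynomial ℤ)) + k = k * k := by
    exact_mod_cast Nat.two_mul_choose_two_add_self k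
  simp only [jsMonomial, jsCoeff, D.leibniz, D.leibniz_pow_of_eq_mul hb,
    D.leibniz_pow_of_eq_mul hc, ha, smul_eq_mul, Nat.choose_succ_succ', Nat.choose_one_right,
    map_mul, map_add, map_natCast, map_one, pow_add, pow_succ]
  linear_combination (X (GVar.a k) * X GVar.b ^ k.choose 2 * X GVar.c ^ k) * hchoose

lemma iterate_derivation_eq_sum_JS
    (ha : ∀ j : ℕ, D (X (GVar.a j)) = X (GVar.a (j + 1)) * X GVar.b ^ j * X GVar.c)
    (hb : D (X GVar.b) = 2 * X GVar.b)
    (hc : D (X GVar.c) = C (1 + Polynomial.X) * X GVar.c) (n : ℕ) :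
    (⇑D)^[n] (X (GVar.a 0)) = ∑ k ∈ Finset.range (n + 1), C (JS n k) * jsMonomial k := by
  induction n with
  | zero => simp [jsMonomial, JS]
  | succ n ih =>
    set f : ℕ → MvPolynomial GVar (Polynomial ℤ) := fun k => C (jsCoeff k * JS n k) * jsMonomial k
    have hshift : ∑ k ∈ Finset.range (n + 1), f (k + 1) = ∑ k ∈ Finset.range (n + 1), f k := by
      have hf0 : f 0 = 0 := by simp [f, jsCoeff]
      have hflast : f (n + 1) = 0 := by simp [f, JS_eq_zero_of_lt (Nat.lt_succ_self n)]
      have h := Finset.sum_range_succ' f (n + 1)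
      rwa [Finset.sum_range_succ, hf0, hflast, add_zero, add_zero, eq_comm] at h
    have hD : ∀ k, D (C (JS n k) * jsMonomial k) = C (JS n k) * jsMonomial (k + 1) + f k := by
      intro k
      rw [← smul_eq_C_mul, D.map_smul, derivation_jsMonomial D ha hb hc, smul_eq_C_mul]
      simp only [f, map_mul]
      ring
    have hsucc : ∀ k, C (JS (n + 1) (k + 1)) * jsMonomial (k + 1) =
        C (JS n k) * jsMonomial (k + 1) + f (k + 1) := by
      intro k
      rw [JS_succ_succ, map_add, add_mul]
    rw [Function.iterate_succ_apply', ih, map_sum, Finset.sum_range_succ' _ (n + 1),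
      JS_succ_zero, map_zero, zero_mul, add_zero]
    simp only [hD, hsucc, Finset.sum_add_distrib, hshift]

end

/-- Any `ℤ[z]`-linear derivation `D` of `ℤ[z][a₀, a₁, …, b, c]` with
`D(aⱼ) = a_{j+1} bʲ c`, `D(b) = 2b` and `D(c) = (1+z)c` satisfies
`Dⁿ(a₀) = Σ_{k=1}^{n} JSₙᵏ(z) a_k b^{C(k,2)} c^k`. -/
theorem grammar_JS
    (D : Derivation (Polynomial ℤ) (MvPolynomial GVar (Polynomial ℤ))
      (MvPolynomial GVar (Polynomial ℤ)))
    (ha : ∀ j : ℕ, D (X (GVar.a j)) = X (GVar.a (j + 1)) * X GVar.b ^ j * X GVar.c)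
    (hb : D (X GVar.b) = 2 * X GVar.b)
    (hc : D (X GVar.c) = C (1 + Polynomial.X) * X GVar.c) :
    ∀ n : ℕ, 1 ≤ n →
      (fun p => D p)^[n] (X (GVar.a 0)) =
        ∑ k ∈ Finset.Icc 1 n,
          C (JS n k) * X (GVar.a k) * X GVar.b ^ Nat.choose k 2 * X GVar.c ^ k := by
  intro n hn
  obtain ⟨m, rfl⟩ := Nat.exists_eq_add_of_le' hn
  rw [iterate_derivation_eq_sum_JS D ha hb hc, Nat.range_succ_eq_Icc_zero,
    ← Finset.insert_Icc_add_one_left_eq_Icc (Nat.zero_le _), Finset.sum_insert (by simp),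
    JS_succ_zero, map_zero, zero_mul, zero_add]
  simp only [jsMonomial, zero_add, mul_assoc]
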